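/- arXiv:0909.3821 — 2 statements merged into one kernel-verified Lean document; each statement's English description precedes it below -/
import Mathlib

section
/- Kozak's theorem: Let (A_τ)_{τ>0} ∈ E. The family (A_τ) is stable if and only if there exists a family (B_τ)_{τ>0} ∈ E such that ‖A_τ B_τ − I‖ → 0 and ‖B_τ A_τ − I‖ → 0 as τ → ∞ (that is, the coset of (A_τ) is invertible in the quotient Banach algebra E/G). -/
noncomputable section

open MeasureTheory Filter Set
open scoped ENNReal
set_option synthInstance.maxHeartbeats 1000000
set_option maxHeartbeats 1000000

/-- The Lebesgue space `L^p(ℝ)` of complex-valued functions. -/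
abbrev LpR (p : ℝ≥0∞) [Fact (1 ≤ p)] : Type :=
  Lp ℂ p (volume : Measure ℝ)

/-- The Banach algebra of bounded linear operators on `L^p(ℝ)`. -/
abbrev Bop (p : ℝ≥0∞) [Fact (1 ≤ p)] : Type :=
  LpR p →L[ℂ] LpR p

/-- The index set `{τ ∈ ℝ : τ > 0}`. -/
abbrev PosR : Type := {τ : ℝ // 0 < τ}

instance LpR.instNontrivial (p : ℝ≥0∞) [Fact (1 ≤ p)] : Nontrivial (LpR p) := by
  have hp0 : p ≠ 0 := by
    have h1 : (1 : ℝ≥0∞) ≤ p := Fact.out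
    intro h; rw [h] at h1; simp at h1
  have hμ : (volume : Measure ℝ) (Set.Ioo (0 : ℝ) 1) = 1 := by simp
  have hμ' : (volume : Measure ℝ) (Set.Ioo (0 : ℝ) 1) ≠ ∞ := by simp [hμ]
  refine ⟨⟨MeasureTheory.indicatorConstLp p measurableSet_Ioo hμ' (1 : ℂ), 0, fun h => ?_⟩⟩
  have hn := MeasureTheory.norm_indicatorConstLp' (p := p) (hs := measurableSet_Ioo)
    (hμs := hμ') (c := (1 : ℂ)) hp0 (by simp [hμ])
  rw [h] at hn
  simp [hμ] at hn

/-- The Banach algebra `E` of bounded families `(A_τ)_{τ>0}` of bounded operators on `L^p(ℝ)`,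
with pointwise operations and supremum norm. -/
abbrev Efam (p : ℝ≥0∞) [Fact (1 ≤ p)] : Type :=
  lp (fun _ : PosR => Bop p) ∞

/-- The oscillation `osc(f, I) = sup_{t,s ∈ I} |f(t) - f(s)|`. -/
def osc (f : ℝ → ℂ) (I : Set ℝ) : ℝ :=
  sSup ((fun q : ℝ × ℝ => ‖f q.1 - f q.2‖) '' (I ×ˢ I))

/-- The set `SO` of (bounded continuous) slowly oscillating functions. -/
def SOset : Set (ℝ → ℂ) :=
  {f | Continuous f ∧ (∃ M : ℝ, ∀ x : ℝ, ‖f x‖ ≤ M) ∧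
    Tendsto (fun x : ℝ => osc f (Icc (-(2 * x)) (-x) ∪ Icc x (2 * x))) atTop (nhds 0)}

/-- The set `SO¹` of slowly oscillating functions that are continuously differentiable with
bounded derivative and satisfy `x f'(x) → 0` as `|x| → ∞`. -/
def SO1set : Set (ℝ → ℂ) :=
  {f | f ∈ SOset ∧ ContDiff ℝ 1 f ∧ (∃ M : ℝ, ∀ x : ℝ, ‖deriv f x‖ ≤ M) ∧
    Tendsto (fun x : ℝ => x • deriv f x) (cocompact ℝ) (nhds 0)}

/-- `IsFourierL2 sgn F` says that the bounded operator `F` on `L²(ℝ)` is the continuous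
extension of the Fourier integral `φ ↦ (2π)^{-1/2} ∫ e^{sgn·i·x·y} φ(y) dy`
(for `sgn = 1` this is the Fourier transform of the paper, for `sgn = -1` its inverse). -/
def IsFourierL2 (sgn : ℝ) (F : LpR 2 →L[ℂ] LpR 2) : Prop :=
  ∀ (φ : ℝ → ℂ), Integrable φ volume → ∀ h2 : MemLp φ 2 volume,
    (F (h2.toLp φ) : ℝ → ℂ) =ᵐ[volume]
      fun x : ℝ => ((Real.sqrt (2 * Real.pi))⁻¹ : ℂ) *
        ∫ y : ℝ, Complex.exp (Complex.I * (sgn * x * y)) * φ y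

/-- `IsConvOp p a W` says that `W = W⁰(a) = F⁻¹ a F` is the bounded extension to `L^p(ℝ)` of the
Fourier multiplier with symbol `a`, i.e. `a` is a Fourier multiplier on `L^p(ℝ)` and `W` is the
associated convolution operator. -/
def IsConvOp (p : ℝ≥0∞) [Fact (1 ≤ p)] (a : ℝ → ℂ) (W : Bop p) : Prop :=
  ∃ Ft Fi : LpR 2 →L[ℂ] LpR 2, IsFourierL2 1 Ft ∧ IsFourierL2 (-1) Fi ∧
    ∀ (φ : ℝ → ℂ) (h2 : MemLp φ 2 volume) (hp : MemLp φ p volume),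
      ∃ ψ : LpR 2,
        (ψ : ℝ → ℂ) =ᵐ[volume] (fun x : ℝ => a x * (Ft (h2.toLp φ) : ℝ → ℂ) x) ∧
        (W (hp.toLp φ) : ℝ → ℂ) =ᵐ[volume] (Fi ψ : ℝ → ℂ)

/-- `a ∈ M_p`: `a` is a Fourier multiplier on `L^p(ℝ)`. -/
def MemMp (p : ℝ≥0∞) [Fact (1 ≤ p)] (a : ℝ → ℂ) : Prop :=
  ∃ W : Bop p, IsConvOp p a W

/-- The closure of a set `S` of functions in the norm of the multiplier algebra `M_p`
(the norm being `‖a‖_{M_p} = ‖W⁰(a)‖`). -/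
def MpClosure (p : ℝ≥0∞) [Fact (1 ≤ p)] (S : Set (ℝ → ℂ)) : Set (ℝ → ℂ) :=
  {a | ∃ W : Bop p, IsConvOp p a W ∧
    ∀ ε : ℝ, 0 < ε → ∃ b ∈ S, ∃ Wb : Bop p, IsConvOp p b Wb ∧ ‖W - Wb‖ < ε}

/-- `SO_p`, the closure of `SO¹` in the norm of `M_p`. -/
def SOp (p : ℝ≥0∞) [Fact (1 ≤ p)] : Set (ℝ → ℂ) :=
  MpClosure p SO1set

/-- Piecewise constant functions on `ℝ` with at most finitely many jumps. -/
def IsPiecewiseConst (a : ℝ → ℂ) : Prop :=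
  ∃ s : Finset ℝ, ∀ x y : ℝ, x < y → (∀ z ∈ s, z ≤ x ∨ y ≤ z) → a x = a y

/-- `PC_p`, the closure in `M_p` of the piecewise constant functions with finitely many jumps. -/
def PCp (p : ℝ≥0∞) [Fact (1 ≤ p)] : Set (ℝ → ℂ) :=
  MpClosure p {a | IsPiecewiseConst a}

/-- `[PC_p, SO_p]`, the smallest closed subalgebra of `M_p` containing `PC_p` and `SO_p`:
the closure in the `M_p` norm of the (pointwise) subalgebra generated by `PC_p ∪ SO_p`. -/
def PCSOp (p : ℝ≥0∞) [Fact (1 ≤ p)] : Set (ℝ → ℂ) :=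
  MpClosure p ((Algebra.adjoin ℂ (PCp p ∪ SOp p) : Subalgebra ℂ (ℝ → ℂ)) : Set (ℝ → ℂ))

/-- `PC`: functions possessing finite one-sided limits at every point of `ℝ` and finite
limits at `±∞`. -/
def PCset : Set (ℝ → ℂ) :=
  {a | (∀ x : ℝ, ∃ l : ℂ, Tendsto a (nhdsWithin x (Iio x)) (nhds l)) ∧
       (∀ x : ℝ, ∃ l : ℂ, Tendsto a (nhdsWithin x (Ioi x)) (nhds l)) ∧
       (∃ l : ℂ, Tendsto a atBot (nhds l)) ∧ (∃ l : ℂ, Tendsto a atTop (nhds l))}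

/-- `C(ℝ̇)`: continuous functions having equal finite limits at `-∞` and `+∞`. -/
def CdotR : Set (ℝ → ℂ) :=
  {f | Continuous f ∧ ∃ l : ℂ, Tendsto f atBot (nhds l) ∧ Tendsto f atTop (nhds l)}

/-- The complex indicator function of a set of reals. -/
def chiC (s : Set ℝ) : ℝ → ℂ :=
  s.indicator fun _ => (1 : ℂ)

/-- `T` is the operator of multiplication by the function `a` on `L^p(ℝ)`. -/
def IsMulOp (p : ℝ≥0∞) [Fact (1 ≤ p)] (a : ℝ → ℂ) (T : Bop p) : Prop :=
  ∀ f : LpR p, (T f : ℝ → ℂ) =ᵐ[volume] fun x : ℝ => a x * f x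

/-- `V` is the shift operator `(V f)(x) = f(x - t)` on `L^p(ℝ)`. -/
def IsShiftOp (p : ℝ≥0∞) [Fact (1 ≤ p)] (t : ℝ) (V : Bop p) : Prop :=
  ∀ f : LpR p, (V f : ℝ → ℂ) =ᵐ[volume] fun x : ℝ => f (x - t)

/-- `Z` is the dilation operator `(Z f)(x) = τ^{-1/p} f(x/τ)` on `L^p(ℝ)`. -/
def IsDilationOp (p : ℝ≥0∞) [Fact (1 ≤ p)] (τ : ℝ) (Z : Bop p) : Prop :=
  ∀ f : LpR p, (Z f : ℝ → ℂ) =ᵐ[volume]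
    fun x : ℝ => ((τ ^ (-(1 / p.toReal)) : ℝ) : ℂ) * f (x / τ)

/-- `U` is the operator of multiplication by `e^{iηx}` on `L^p(ℝ)`. -/
def IsModOp (p : ℝ≥0∞) [Fact (1 ≤ p)] (η : ℝ) (U : Bop p) : Prop :=
  ∀ f : LpR p, (U f : ℝ → ℂ) =ᵐ[volume]
    fun x : ℝ => Complex.exp (Complex.I * (η * x)) * f x

/-- Constant family in `E`. -/
def constE (p : ℝ≥0∞) [Fact (1 ≤ p)] (T : Bop p) : Efam p :=
  ⟨fun _ => T, memℓp_infty ⟨‖T‖, by rintro x ⟨i, rfl⟩; exact le_rfl⟩⟩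

/-- `*`-strong convergence of a family `(A_τ)_{τ>0}` of operators on `L^p(ℝ)` to `L` as
`τ → +∞`: strong convergence together with strong convergence of the dual operators on the
dual space. -/
def StarStrongLim (p : ℝ≥0∞) [Fact (1 ≤ p)] (A : PosR → Bop p) (L : Bop p) : Prop :=
  (∀ f : LpR p, Tendsto (fun τ : PosR => A τ f) atTop (nhds (L f))) ∧
  (∀ φ : StrongDual ℂ (LpR p),
    Tendsto (fun τ : PosR => φ.comp (A τ)) atTop (nhds (φ.comp L)))

/-- Membership in the ideal `G ⊆ E` of families tending to zero in norm. -/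
def MemG (p : ℝ≥0∞) [Fact (1 ≤ p)] (A : Efam p) : Prop :=
  Tendsto (fun τ : PosR => ‖A τ‖) atTop (nhds 0)

/-- Membership in the algebra `F ⊆ E` (relative to the family `V` of shift operators):
`(A_τ)`, `(V_{-τ} A_τ V_τ)` and `(V_τ A_τ V_{-τ})` converge `*`-strongly as `τ → +∞`. -/
def MemF (p : ℝ≥0∞) [Fact (1 ≤ p)] (V : ℝ → Bop p) (A : Efam p) : Prop :=
  (∃ L : Bop p, StarStrongLim p (fun τ : PosR => A τ) L) ∧
  (∃ L : Bop p, StarStrongLim p (fun τ : PosR => V (-(τ : ℝ)) * A τ * V (τ : ℝ)) L) ∧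
  (∃ L : Bop p, StarStrongLim p (fun τ : PosR => V (τ : ℝ) * A τ * V (-(τ : ℝ))) L)

/-- Membership in the ideal `J`: families of the form
`V_τ K₁ V_{-τ} + K₀ + V_{-τ} K_{-1} V_τ + G_τ` with `Km1, K₀, K₁` compact and `(G_τ) ∈ G`. -/
def MemJ (p : ℝ≥0∞) [Fact (1 ≤ p)] (V : ℝ → Bop p) (A : Efam p) : Prop :=
  ∃ K₁ K₀ Km1 : Bop p,
    IsCompactOperator (⇑K₁) ∧ IsCompactOperator (⇑K₀) ∧ IsCompactOperator (⇑Km1) ∧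
    ∃ G : Efam p, MemG p G ∧
      ∀ τ : PosR, A τ =
        V (τ : ℝ) * K₁ * V (-(τ : ℝ)) + K₀ + V (-(τ : ℝ)) * Km1 * V (τ : ℝ) + G τ

/-- Membership in the algebra `L ⊆ F` of sequences of local type. -/
def MemL (p : ℝ≥0∞) [Fact (1 ≤ p)] (V : ℝ → Bop p) (A : Efam p) : Prop :=
  MemF p V A ∧
  (∀ f ∈ CdotR, ∀ Mf : Bop p, IsMulOp p f Mf →
    MemJ p V (A * constE p Mf - constE p Mf * A)) ∧
  (∀ g ∈ SOp p, ∀ Wg : Bop p, IsConvOp p g Wg →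
    MemJ p V (A * constE p Wg - constE p Wg * A))

/-- Stability of a family in `E`. -/
def IsStableE (p : ℝ≥0∞) [Fact (1 ≤ p)] (A : Efam p) : Prop :=
  ∃ τ₀ : ℝ, 0 < τ₀ ∧ ∃ C : ℝ, ∀ τ : PosR, τ₀ < (τ : ℝ) →
    ∃ B : Bop p, A τ * B = 1 ∧ B * A τ = 1 ∧ ‖B‖ ≤ C

/-- Stability of a family of operators indexed by `ℝ` (conditions only for `τ > τ₀`). -/
def IsStableFam (p : ℝ≥0∞) [Fact (1 ≤ p)] (A : ℝ → Bop p) : Prop :=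
  ∃ τ₀ : ℝ, 0 < τ₀ ∧ ∃ C : ℝ, ∀ τ : ℝ, τ₀ < τ →
    ∃ B : Bop p, A τ * B = 1 ∧ B * A τ = 1 ∧ ‖B‖ ≤ C

/-- The smallest closed unital subalgebra of `E` containing a set `S`. -/
def ClosedSubalgE (p : ℝ≥0∞) [Fact (1 ≤ p)] (S : Set (Efam p)) : Set (Efam p) :=
  ⋂₀ {T : Set (Efam p) | S ⊆ T ∧ IsClosed T ∧ (1 : Efam p) ∈ T ∧
    (∀ x ∈ T, ∀ y ∈ T, x + y ∈ T) ∧ (∀ x ∈ T, ∀ y ∈ T, x * y ∈ T) ∧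
    (∀ c : ℂ, ∀ x ∈ T, c • x ∈ T)}

/-- The smallest closed two-sided ideal of a (closed) subalgebra `Lset ⊆ E` containing `S`. -/
def ClosedIdealIn (p : ℝ≥0∞) [Fact (1 ≤ p)] (Lset S : Set (Efam p)) : Set (Efam p) :=
  ⋂₀ {T : Set (Efam p) | S ⊆ T ∧ T ⊆ Lset ∧ IsClosed T ∧
    (∀ x ∈ T, ∀ y ∈ T, x + y ∈ T) ∧ (∀ c : ℂ, ∀ x ∈ T, c • x ∈ T) ∧
    (∀ a ∈ Lset, ∀ x ∈ T, a * x ∈ T ∧ x * a ∈ T)}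

/-- The generating set of the algebra `A`: the constant families `(aI)` with `a ∈ PC`,
the constant families `(W⁰(b))` with `b ∈ [PC_p, SO_p]`, and the family `(P_τ)` of
multiplications by the indicators of `(-τ, τ)`. -/
def genSetA (p : ℝ≥0∞) [Fact (1 ≤ p)] : Set (Efam p) :=
  {A : Efam p | ∃ a ∈ PCset, ∀ τ : PosR, IsMulOp p a (A τ)} ∪
  {A : Efam p | ∃ b ∈ PCSOp p, ∀ τ : PosR, IsConvOp p b (A τ)} ∪
  {A : Efam p | ∀ τ : PosR, IsMulOp p (chiC (Ioo (-(τ : ℝ)) (τ : ℝ))) (A τ)}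

/-- Membership in the algebra `A`, the smallest closed subalgebra of `E` containing all
`(aI)` with `a ∈ PC`, all `(W⁰(b))` with `b ∈ [PC_p, SO_p]`, and `(P_τ)`. -/
def MemAlgA (p : ℝ≥0∞) [Fact (1 ≤ p)] (A : Efam p) : Prop :=
  A ∈ ClosedSubalgE p (genSetA p)

/-- A character of the commutative unital C*-algebra `SO` belonging to the fiber
`M_∞(SO)`: a unital multiplicative linear functional annihilating every `f ∈ SO`
vanishing at infinity (modelled as a total function on `ℝ → ℂ` with the character
properties required on `SO`). -/
def IsCharInftySO (χ : (ℝ → ℂ) → ℂ) : Prop :=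
  (∀ f ∈ SOset, ∀ g ∈ SOset, χ (f + g) = χ f + χ g) ∧
  (∀ f ∈ SOset, ∀ g ∈ SOset, χ (f * g) = χ f * χ g) ∧
  (∀ c : ℂ, ∀ f ∈ SOset, χ (c • f) = c * χ f) ∧
  χ 1 = 1 ∧
  (∀ f ∈ SOset, Tendsto f (cocompact ℝ) (nhds 0) → χ f = 0)

/-- The parametrization `f_s` of the circular arc `𝔄_s(0,1)`. -/
def arcFun (s : ℝ) (μ : ℝ) : ℂ :=
  if s = 2 then (μ : ℂ)
  else ((Real.sin (Real.pi * μ - 2 * Real.pi * μ / s) / Real.sin (Real.pi - 2 * Real.pi / s) : ℝ) : ℂ) *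
    Complex.exp (Complex.I * (((Real.pi - 2 * Real.pi / s) * (μ - 1) : ℝ) : ℂ))

/-- The lentiform domain `𝔏_p`, the union of the arcs `𝔄_s(0,1)` for
`s ∈ [min{p,q}, max{p,q}]`, `q = p/(p-1)`. -/
def lens (p : ℝ) : Set ℂ :=
  ⋃ s ∈ Icc (min p (p / (p - 1))) (max p (p / (p - 1))), arcFun s '' Icc (0 : ℝ) 1

/-! If `‖A_τ B_τ - 1‖` and `‖B_τ A_τ - 1‖` are eventually at most `1/2`, Neumann series make
`A_τ B_τ` and `B_τ A_τ` invertible with inverses of norm at most `2`, so `A_τ` has the two-sided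
inverse `B_τ (A_τ B_τ)⁻¹` of norm at most `2 ‖B‖`. Conversely, uniformly bounded inverses of `A_τ`
for large `τ`, extended by `0`, form a family in `E` inverting `A` modulo `G`. -/

theorem lp.infty_mul_sub_one_apply {ι R : Type*} [NormedRing R] [NormOneClass R]
    (A B : lp (fun _ : ι => R) ∞) (i : ι) :
    (A * B - 1 : lp (fun _ : ι => R) ∞) i = A i * B i - 1 :=
  rfl

theorem lp.exists_infty_eventually_of_eventually_exists_norm_le {ι E : Type*}
    [NormedAddCommGroup E] {l : Filter ι} {P : ι → E → Prop} {C : ℝ}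
    (h : ∀ᶠ i in l, ∃ x, P i x ∧ ‖x‖ ≤ C) :
    ∃ B : lp (fun _ : ι => E) ∞, ∀ᶠ i in l, P i (B i) := by
  classical
  let b : ι → E := fun i => if hi : ∃ x, P i x ∧ ‖x‖ ≤ C then hi.choose else 0
  have hb : ∀ i, ‖b i‖ ≤ max C 0 := fun i => by
    by_cases hi : ∃ x, P i x ∧ ‖x‖ ≤ C
    · simpa only [b, dif_pos hi] using hi.choose_spec.2.trans (le_max_left C 0)
    · simp [b, hi]
  refine ⟨⟨b, memℓp_infty ⟨max C 0, Set.forall_mem_range.2 hb⟩⟩, ?_⟩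
  filter_upwards [h] with i hi
  simpa only [b, dif_pos hi] using hi.choose_spec.1

theorem norm_inv_oneSub_le {R : Type*} [NormedRing R] [HasSummableGeomSeries R] [NormOneClass R]
    (t : R) (ht : ‖t‖ < 1) : ‖(↑(Units.oneSub t ht)⁻¹ : R)‖ ≤ (1 - ‖t‖)⁻¹ := by
  change ‖∑' n : ℕ, t ^ n‖ ≤ _
  simpa only [norm_one, sub_self, zero_add] using tsum_geometric_le_of_norm_lt_one t ht

theorem exists_inverse_norm_le_of_norm_mul_sub_one_le_half {R : Type*} [NormedRing R]
    [HasSummableGeomSeries R] [NormOneClass R] {a b : R}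
    (hab : ‖a * b - 1‖ ≤ 1 / 2) (hba : ‖b * a - 1‖ ≤ 1 / 2) :
    ∃ c : R, a * c = 1 ∧ c * a = 1 ∧ ‖c‖ ≤ 2 * ‖b‖ := by
  rw [← norm_neg, neg_sub] at hab hba
  let u := Units.oneSub (1 - a * b) (by linarith)
  let v := Units.oneSub (1 - b * a) (by linarith)
  have hu : (u : R) = a * b := sub_sub_cancel 1 (a * b)
  have hv : (v : R) = b * a := sub_sub_cancel 1 (b * a)
  have hright : a * (b * ↑u⁻¹) = 1 := by rw [← mul_assoc, ← hu, Units.mul_inv]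
  have hleft : (↑v⁻¹ * b) * a = 1 := by rw [mul_assoc, ← hv, Units.inv_mul]
  refine ⟨b * ↑u⁻¹, hright, left_inv_eq_right_inv hleft hright ▸ hleft, ?_⟩
  have hu_inv : ‖(↑u⁻¹ : R)‖ ≤ 2 := (norm_inv_oneSub_le _ _).trans <| by
    rw [inv_le_comm₀ (by linarith) two_pos]; linarith
  calc ‖b * ↑u⁻¹‖ ≤ ‖b‖ * ‖(↑u⁻¹ : R)‖ := norm_mul_le _ _
    _ ≤ ‖b‖ * 2 := by gcongr
    _ = 2 * ‖b‖ := mul_comm _ _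

theorem PosR.eventually_atTop_iff {P : PosR → Prop} :
    (∀ᶠ τ in atTop, P τ) ↔ ∃ τ₀ : ℝ, 0 < τ₀ ∧ ∀ τ : PosR, τ₀ < τ → P τ := by
  have : Nonempty PosR := ⟨⟨1, one_pos⟩⟩
  rw [eventually_atTop]
  constructor
  · rintro ⟨τ₁, h⟩
    exact ⟨τ₁, τ₁.2, fun τ hτ => h τ hτ.le⟩
  · rintro ⟨τ₀, hτ₀, h⟩
    exact ⟨⟨τ₀ + 1, by linarith⟩, fun τ hτ => h τ ((lt_add_one τ₀).trans_le hτ)⟩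

theorem isStableE_iff_eventually (p : ℝ≥0∞) [Fact (1 ≤ p)] (A : Efam p) :
    IsStableE p A ↔
      ∃ C : ℝ, ∀ᶠ τ in atTop, ∃ B : Bop p, (A τ * B = 1 ∧ B * A τ = 1) ∧ ‖B‖ ≤ C := by
  simp only [PosR.eventually_atTop_iff, IsStableE, and_assoc]
  exact ⟨fun ⟨τ₀, hτ₀, C, h⟩ => ⟨C, τ₀, hτ₀, h⟩, fun ⟨C, τ₀, hτ₀, h⟩ => ⟨τ₀, hτ₀, C, h⟩⟩

theorem statement6_general (p : ℝ≥0∞) [Fact (1 ≤ p)] (A : Efam p) :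
    IsStableE p A ↔
      ∃ B : Efam p,
        Tendsto (fun τ : PosR => ‖(A * B - 1 : Efam p) τ‖) atTop (nhds 0) ∧
        Tendsto (fun τ : PosR => ‖(B * A - 1 : Efam p) τ‖) atTop (nhds 0) := by
  simp only [isStableE_iff_eventually, lp.infty_mul_sub_one_apply]
  constructor
  · rintro ⟨C, hC⟩
    obtain ⟨B, hB⟩ := lp.exists_infty_eventually_of_eventually_exists_norm_le hC
    refine ⟨B, ?_, ?_⟩ <;> refine tendsto_const_nhds.congr' ?_ <;>
      filter_upwards [hB] with τ ⟨hright, hleft⟩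
    · rw [hright, sub_self, norm_zero]
    · rw [hleft, sub_self, norm_zero]
  · rintro ⟨B, hAB, hBA⟩
    refine ⟨2 * ‖B‖, ?_⟩
    filter_upwards [hAB.eventually (eventually_le_nhds one_half_pos),
      hBA.eventually (eventually_le_nhds one_half_pos)] with τ hright hleft
    obtain ⟨c, hc₁, hc₂, hc⟩ := exists_inverse_norm_le_of_norm_mul_sub_one_le_half hright hleft
    have hBτ : ‖B τ‖ ≤ ‖B‖ := lp.norm_apply_le_norm ENNReal.top_ne_zero B τ
    exact ⟨c, ⟨hc₁, hc₂⟩, hc.trans (by gcongr)⟩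

theorem statement6 (p : ℝ≥0∞) [Fact (1 ≤ p)] (hp : 1 < p) (hp' : p ≠ ∞) (A : Efam p) :
    IsStableE p A ↔
      ∃ B : Efam p,
        Tendsto (fun τ : PosR => ‖(A * B - 1 : Efam p) τ‖) atTop (nhds 0) ∧
        Tendsto (fun τ : PosR => ‖(B * A - 1 : Efam p) τ‖) atTop (nhds 0) :=
  statement6_general p A

end
end

section
/- The algebra F is inverse closed in E: if (A_τ) ∈ F, every A_τ is invertible, and sup_{τ>0} ‖A_τ^{−1}‖ < ∞, then (A_τ^{−1}) ∈ F. Moreover F/G is inverse closed in E/G: if (A_τ) ∈ F and there exists (B_τ) ∈ E with ‖A_τ B_τ − I‖ → 0 and ‖B_τ A_τ − I‖ → 0 as τ → ∞, then there exists (B'_τ) ∈ F with ‖A_τ B'_τ − I‖ → 0 and ‖B'_τ A_τ − I‖ → 0. -/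
noncomputable section

open MeasureTheory Filter Set
open scoped ENNReal
set_option synthInstance.maxHeartbeats 1000000
set_option maxHeartbeats 1000000

/-!
If `A τ → L` *-strongly and `‖A τ⁻¹‖ ≤ C`, then `L` and its transpose are bounded below by
`1 / C`. Hence `L` has closed range, and dense range by Hahn–Banach, so `L` is invertible; then
`A τ⁻¹ - L⁻¹ = A τ⁻¹ (L - A τ) L⁻¹` tends to zero strongly, and likewise for the transposes.
The shifts are invertible isometries, so the same applies to the conjugated families, which gives
inverse closedness of `F`. For `F / G`: as soon as `‖A τ B τ - 1‖ ≤ 1 / 2` and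
`‖B τ A τ - 1‖ < 1`, the operator `A τ` is invertible with `‖A τ⁻¹‖ ≤ 2 ‖B‖`, so the inverses,
truncated to this bound, form a family that is eventually inverse to `A` and lies in `F` by the
first part.
-/

open Topology

theorem conj_mul_conj_eq_one {M : Type*} [Monoid M] {u v a b : M} (huv : u * v = 1)
    (hvu : v * u = 1) (hab : a * b = 1) : (u * a * v) * (u * b * v) = 1 := by
  calc (u * a * v) * (u * b * v) = u * (a * (v * u) * b) * v := by simp only [mul_assoc]
    _ = 1 := by rw [hvu, mul_one, hab, mul_one, huv]

theorem isUnit_of_isUnit_mul_of_isUnit_mul {M : Type*} [Monoid M] {a b : M}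
    (hab : IsUnit (a * b)) (hba : IsUnit (b * a)) : IsUnit a := by
  obtain ⟨u, hu⟩ := hab
  obtain ⟨v, hv⟩ := hba
  have hright : a * (b * ↑u⁻¹) = 1 := by rw [← mul_assoc, ← hu, u.mul_inv]
  have hleft : ↑v⁻¹ * b * a = 1 := by rw [mul_assoc, ← hv, v.inv_mul]
  exact isUnit_iff_exists.2 ⟨_, hright, left_inv_eq_right_inv hleft hright ▸ hleft⟩

theorem norm_mul_mul_le_of_norm_le_one {R : Type*} [SeminormedRing R] {u v : R} (hu : ‖u‖ ≤ 1)
    (hv : ‖v‖ ≤ 1) (a : R) : ‖u * a * v‖ ≤ ‖a‖ :=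
  calc ‖u * a * v‖ ≤ ‖u‖ * ‖a‖ * ‖v‖ := norm_mul₃_le
    _ ≤ 1 * ‖a‖ * 1 := by gcongr
    _ = ‖a‖ := by ring

section NormedRing

variable {R : Type*} [NormedRing R] [HasSummableGeomSeries R]

theorem isUnit_of_norm_sub_one_lt_one {a : R} (ha : ‖a - 1‖ < 1) : IsUnit a := by
  have h := (Units.oneSub (1 - a) (by rwa [norm_sub_rev])).isUnit
  rwa [Units.val_oneSub, sub_sub_cancel] at h

theorem isUnit_and_norm_inverse_le {a b : R} (hab : ‖a * b - 1‖ ≤ 1 / 2)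
    (hba : ‖b * a - 1‖ < 1) : IsUnit a ∧ ‖Ring.inverse a‖ ≤ 2 * ‖b‖ := by
  have ha : IsUnit a := isUnit_of_isUnit_mul_of_isUnit_mul
    (isUnit_of_norm_sub_one_lt_one (hab.trans_lt (by norm_num))) (isUnit_of_norm_sub_one_lt_one hba)
  refine ⟨ha, ?_⟩
  have hinv : Ring.inverse a = b - Ring.inverse a * (a * b - 1) := by
    rw [mul_sub, mul_one, Ring.inverse_mul_cancel_left _ _ ha, sub_sub_cancel]
  have : ‖Ring.inverse a‖ ≤ ‖b‖ + ‖Ring.inverse a‖ * (1 / 2) :=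
    calc ‖Ring.inverse a‖ ≤ ‖b‖ + ‖Ring.inverse a * (a * b - 1)‖ := by
          conv_lhs => rw [hinv]
          exact norm_sub_le _ _
      _ ≤ ‖b‖ + ‖Ring.inverse a‖ * (1 / 2) := by
          gcongr
          exact (norm_mul_le _ _).trans (by gcongr)
  linarith

end NormedRing

theorem Submodule.exists_strongDual_eq_zero_of_notMem {𝕜 X : Type*} [RCLike 𝕜]
    [NormedAddCommGroup X] [NormedSpace 𝕜 X] {S : Submodule 𝕜 X} (hS : IsClosed (S : Set X))
    {y : X} (hy : y ∉ S) : ∃ φ : StrongDual 𝕜 X, (∀ x ∈ S, φ x = 0) ∧ φ y ≠ 0 := by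
  have : IsClosed (S : Set X) := hS
  have hy' : S.mkQL y ≠ 0 := by simpa [Submodule.Quotient.mk_eq_zero] using hy
  obtain ⟨g, hg⟩ := SeparatingDual.exists_ne_zero (R := 𝕜) hy'
  exact ⟨g.comp S.mkQL, fun x hx => by simp [(Submodule.Quotient.mk_eq_zero S).2 hx], hg⟩

namespace ContinuousLinearMap

section NormedField

variable {𝕜 X : Type*} [NontriviallyNormedField 𝕜] [NormedAddCommGroup X] [NormedSpace 𝕜 X]

def strongDualMap (A : X →L[𝕜] X) : StrongDual 𝕜 X →L[𝕜] StrongDual 𝕜 X :=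
  (compL 𝕜 X X 𝕜).flip A

@[simp]
theorem strongDualMap_apply (A : X →L[𝕜] X) (φ : StrongDual 𝕜 X) :
    A.strongDualMap φ = φ.comp A :=
  rfl

theorem strongDualMap_mul (A B : X →L[𝕜] X) :
    (A * B).strongDualMap = B.strongDualMap * A.strongDualMap :=
  rfl

theorem strongDualMap_one : (1 : X →L[𝕜] X).strongDualMap = 1 :=
  rfl

theorem norm_strongDualMap_le (A : X →L[𝕜] X) : ‖A.strongDualMap‖ ≤ ‖A‖ :=
  opNorm_le_bound _ (norm_nonneg A) fun φ => by
    simpa only [strongDualMap_apply, mul_comm ‖A‖] using opNorm_comp_le φ A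

theorem norm_le_mul_norm_apply_of_mul_eq_one {A B : X →L[𝕜] X} {C : ℝ} (hBA : B * A = 1)
    (hB : ‖B‖ ≤ C) (x : X) : ‖x‖ ≤ C * ‖A x‖ :=
  calc ‖x‖ = ‖B (A x)‖ := by rw [← mul_apply_eq_comp, hBA, one_apply_eq_self]
    _ ≤ ‖B‖ * ‖A x‖ := le_opNorm B (A x)
    _ ≤ C * ‖A x‖ := by gcongr

theorem tendsto_apply_of_eventually_mul_eq_one {ι : Type*} {l : Filter ι}
    {A B : ι → X →L[𝕜] X} {L N : X →L[𝕜] X} {C : ℝ}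
    (hA : ∀ x, Tendsto (fun i => A i x) l (𝓝 (L x))) (hLN : L * N = 1)
    (hB : ∀ᶠ i in l, B i * A i = 1 ∧ ‖B i‖ ≤ C) (y : X) :
    Tendsto (fun i => B i y) l (𝓝 (N y)) := by
  have hLNy : L (N y) = y := by rw [← mul_apply_eq_comp, hLN, one_apply_eq_self]
  have hdefect : Tendsto (fun i => C * ‖y - A i (N y)‖) l (𝓝 0) := by
    simpa [hLNy, norm_sub_rev y] using
      (tendsto_iff_norm_sub_tendsto_zero.1 (hA (N y))).const_mul C
  refine tendsto_iff_norm_sub_tendsto_zero.2 (squeeze_zero' (.of_forall fun _ => norm_nonneg _)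
    ?_ hdefect)
  filter_upwards [hB] with i ⟨hBA, hBC⟩
  have : B i y - N y = B i (y - A i (N y)) := by
    rw [map_sub, ← mul_apply_eq_comp (B i) (A i), hBA, one_apply_eq_self]
  rw [this]
  exact (le_opNorm _ _).trans (by gcongr)

end NormedField

section RCLike

variable {𝕜 X : Type*} [RCLike 𝕜] [NormedAddCommGroup X] [NormedSpace 𝕜 X] [CompleteSpace X]

theorem isUnit_of_norm_le_mul_norm_apply_of_norm_le_mul_norm_comp {L : X →L[𝕜] X} {C : ℝ}
    (hL : ∀ x, ‖x‖ ≤ C * ‖L x‖) (hL' : ∀ φ : StrongDual 𝕜 X, ‖φ‖ ≤ C * ‖φ.comp L‖) :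
    IsUnit L := by
  have hanti : AntilipschitzWith C.toNNReal L :=
    L.antilipschitz_of_bound fun x => (hL x).trans (by gcongr; exact Real.le_coe_toNNReal C)
  refine isUnit_iff_bijective.2 ⟨hanti.injective, fun y => ?_⟩
  by_contra hy
  obtain ⟨φ, hφL, hφy⟩ := (LinearMap.range (L : X →ₗ[𝕜] X)).exists_strongDual_eq_zero_of_notMem
    (hanti.isClosed_range L.uniformContinuous) (by simpa using hy)
  have hφ : φ.comp L = 0 := ext fun x => hφL _ (LinearMap.mem_range_self _ x)
  have : φ = 0 := norm_le_zero_iff.1 (by simpa [hφ] using hL' φ)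
  exact hφy (by simp [this])

theorem exists_tendsto_of_eventually_inverse {ι : Type*} {l : Filter ι} [l.NeBot]
    {A B : ι → X →L[𝕜] X} {L : X →L[𝕜] X} {C : ℝ}
    (hA : ∀ x, Tendsto (fun i => A i x) l (𝓝 (L x)))
    (hA' : ∀ φ : StrongDual 𝕜 X, Tendsto (fun i => φ.comp (A i)) l (𝓝 (φ.comp L)))
    (hB : ∀ᶠ i in l, A i * B i = 1 ∧ B i * A i = 1 ∧ ‖B i‖ ≤ C) :
    ∃ N : X →L[𝕜] X, (∀ y, Tendsto (fun i => B i y) l (𝓝 (N y))) ∧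
      ∀ φ : StrongDual 𝕜 X, Tendsto (fun i => φ.comp (B i)) l (𝓝 (φ.comp N)) := by
  have hBA : ∀ᶠ i in l, B i * A i = 1 ∧ ‖B i‖ ≤ C := hB.mono fun i h => ⟨h.2.1, h.2.2⟩
  have hBA' : ∀ᶠ i in l, (B i).strongDualMap * (A i).strongDualMap = 1 ∧
      ‖(B i).strongDualMap‖ ≤ C :=
    hB.mono fun i h => ⟨by rw [← strongDualMap_mul, h.1, strongDualMap_one],
      (norm_strongDualMap_le _).trans h.2.2⟩
  have hunit : IsUnit L := isUnit_of_norm_le_mul_norm_apply_of_norm_le_mul_norm_comp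
    (fun x => ge_of_tendsto ((hA x).norm.const_mul C)
      (hBA.mono fun i h => norm_le_mul_norm_apply_of_mul_eq_one h.1 h.2 x))
    (fun φ => ge_of_tendsto ((hA' φ).norm.const_mul C)
      (hBA'.mono fun i h => norm_le_mul_norm_apply_of_mul_eq_one h.1 h.2 φ))
  refine ⟨↑hunit.unit⁻¹, tendsto_apply_of_eventually_mul_eq_one hA hunit.mul_val_inv hBA,
    tendsto_apply_of_eventually_mul_eq_one (L := L.strongDualMap)
      (N := (↑hunit.unit⁻¹ : X →L[𝕜] X).strongDualMap) hA' ?_ hBA'⟩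
  rw [← strongDualMap_mul, hunit.val_inv_mul, strongDualMap_one]

end RCLike

end ContinuousLinearMap

namespace IsShiftOp

variable {p : ℝ≥0∞} [Fact (1 ≤ p)] {s t : ℝ} {U W : Bop p}

theorem mul_eq_one (hU : IsShiftOp p s U) (hW : IsShiftOp p t W) (hst : s + t = 0) :
    U * W = 1 := by
  refine ContinuousLinearMap.ext fun f => Lp.ext ?_
  rw [mul_apply_eq_comp, one_apply_eq_self]
  have hWf := (hW f).comp_tendsto
    (measurePreserving_sub_right (volume : Measure ℝ) s).quasiMeasurePreserving.tendsto_ae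
  refine (hU (W f)).trans (hWf.trans (.of_forall fun x => ?_))
  simp [sub_sub, hst]

theorem norm_le_one (hU : IsShiftOp p t U) : ‖U‖ ≤ 1 := by
  refine ContinuousLinearMap.opNorm_le_bound _ zero_le_one fun f => ?_
  have : eLpNorm (U f : ℝ → ℂ) p volume = eLpNorm (f : ℝ → ℂ) p volume := by
    rw [eLpNorm_congr_ae (hU f)]
    exact eLpNorm_comp_measurePreserving (Lp.aestronglyMeasurable f)
      (measurePreserving_sub_right volume t)
  rw [one_mul, Lp.norm_def, Lp.norm_def, this]

end IsShiftOp

theorem MemF.of_eventually_inverse {p : ℝ≥0∞} [Fact (1 ≤ p)] {V : ℝ → Bop p}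
    (hV : ∀ t : ℝ, IsShiftOp p t (V t)) {A B : Efam p} (hA : MemF p V A)
    (hAB : ∀ᶠ τ : PosR in atTop, A τ * B τ = 1 ∧ B τ * A τ = 1) : MemF p V B := by
  have hB (τ : PosR) : ‖B τ‖ ≤ ‖B‖ := lp.norm_apply_le_norm ENNReal.top_ne_zero B τ
  have conj {s t : ℝ} (hst : s + t = 0) {τ : PosR} (h : A τ * B τ = 1 ∧ B τ * A τ = 1) :
      (V s * A τ * V t) * (V s * B τ * V t) = 1 ∧ (V s * B τ * V t) * (V s * A τ * V t) = 1 ∧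
        ‖V s * B τ * V t‖ ≤ ‖B‖ := by
    have huv := (hV s).mul_eq_one (hV t) hst
    have hvu := (hV t).mul_eq_one (hV s) ((add_comm t s).trans hst)
    exact ⟨conj_mul_conj_eq_one huv hvu h.1, conj_mul_conj_eq_one huv hvu h.2,
      (norm_mul_mul_le_of_norm_le_one (hV s).norm_le_one (hV t).norm_le_one _).trans (hB τ)⟩
  obtain ⟨⟨L₀, h₀⟩, ⟨L₁, h₁⟩, ⟨L₂, h₂⟩⟩ := hA
  exact ⟨ContinuousLinearMap.exists_tendsto_of_eventually_inverse h₀.1 h₀.2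
      (hAB.mono fun τ h => ⟨h.1, h.2, hB τ⟩),
    ContinuousLinearMap.exists_tendsto_of_eventually_inverse h₁.1 h₁.2
      (hAB.mono fun τ => conj (neg_add_cancel _)),
    ContinuousLinearMap.exists_tendsto_of_eventually_inverse h₂.1 h₂.2
      (hAB.mono fun τ => conj (add_neg_cancel _))⟩

namespace lp

variable {ι R : Type*} [NormedRing R]

def truncInverse (a : lp (fun _ : ι => R) ∞) (C : ℝ) : lp (fun _ : ι => R) ∞ :=
  ⟨fun i => if ‖Ring.inverse (a i)‖ ≤ C then Ring.inverse (a i) else 0,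
    memℓp_infty ⟨max C 0, by
      rintro _ ⟨i, rfl⟩
      dsimp only
      split_ifs with h
      · exact h.trans (le_max_left _ _)
      · simp⟩⟩

theorem truncInverse_apply_of_norm_le {a : lp (fun _ : ι => R) ∞} {C : ℝ} {i : ι}
    (h : ‖Ring.inverse (a i)‖ ≤ C) : truncInverse a C i = Ring.inverse (a i) :=
  if_pos h

variable [NormOneClass R]

@[simp]
theorem infty_mul_sub_one_apply_s7 (a b : lp (fun _ : ι => R) ∞) (i : ι) :
    (a * b - 1 : lp (fun _ : ι => R) ∞) i = a i * b i - 1 := by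
  simp only [coeFn_sub, infty_coeFn_mul, infty_coeFn_one, Pi.sub_apply, Pi.mul_apply,
    Pi.one_apply]

theorem eventually_isUnit_and_norm_inverse_le [HasSummableGeomSeries R] {l : Filter ι}
    {a b : lp (fun _ : ι => R) ∞} (hab : Tendsto (fun i => ‖(a * b - 1 : lp _ ∞) i‖) l (𝓝 0))
    (hba : Tendsto (fun i => ‖(b * a - 1 : lp _ ∞) i‖) l (𝓝 0)) :
    ∀ᶠ i in l, IsUnit (a i) ∧ ‖Ring.inverse (a i)‖ ≤ 2 * ‖b‖ := by
  filter_upwards [hab.eventually (ge_mem_nhds (by norm_num : (0 : ℝ) < 1 / 2)),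
    hba.eventually (gt_mem_nhds one_pos)] with i hi hi'
  rw [infty_mul_sub_one_apply_s7] at hi hi'
  have := isUnit_and_norm_inverse_le hi hi'
  exact ⟨this.1, this.2.trans (by gcongr; exact norm_apply_le_norm ENNReal.top_ne_zero b i)⟩

end lp

theorem statement7_general (p : ℝ≥0∞) [Fact (1 ≤ p)]
    (V : ℝ → Bop p) (hV : ∀ t : ℝ, IsShiftOp p t (V t)) :
    (∀ A : Efam p, MemF p V A → ∀ B : Efam p,
      (∀ τ : PosR, A τ * B τ = 1 ∧ B τ * A τ = 1) → MemF p V B) ∧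
    (∀ A : Efam p, MemF p V A → ∀ B : Efam p,
      Tendsto (fun τ : PosR => ‖(A * B - 1 : Efam p) τ‖) atTop (nhds 0) →
      Tendsto (fun τ : PosR => ‖(B * A - 1 : Efam p) τ‖) atTop (nhds 0) →
      ∃ B' : Efam p, MemF p V B' ∧
        Tendsto (fun τ : PosR => ‖(A * B' - 1 : Efam p) τ‖) atTop (nhds 0) ∧
        Tendsto (fun τ : PosR => ‖(B' * A - 1 : Efam p) τ‖) atTop (nhds 0)) := by
  refine ⟨fun A hA B hAB => hA.of_eventually_inverse hV (.of_forall hAB),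
    fun A hA B hAB hBA => ?_⟩
  set B' : Efam p := lp.truncInverse A (2 * ‖B‖)
  have hB' : ∀ᶠ τ : PosR in atTop, A τ * B' τ = 1 ∧ B' τ * A τ = 1 := by
    filter_upwards [lp.eventually_isUnit_and_norm_inverse_le hAB hBA] with τ ⟨hunit, hnorm⟩
    rw [lp.truncInverse_apply_of_norm_le hnorm]
    exact ⟨Ring.mul_inverse_cancel _ hunit, Ring.inverse_mul_cancel _ hunit⟩
  refine ⟨B', hA.of_eventually_inverse hV hB', tendsto_const_nhds.congr' ?_,
    tendsto_const_nhds.congr' ?_⟩ <;>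
  filter_upwards [hB'] with τ h <;> simp [h.1, h.2]

theorem statement7 (p : ℝ≥0∞) [Fact (1 ≤ p)] (hp : 1 < p) (hp' : p ≠ ∞)
    (V : ℝ → Bop p) (hV : ∀ t : ℝ, IsShiftOp p t (V t)) :
    (∀ A : Efam p, MemF p V A → ∀ B : Efam p,
      (∀ τ : PosR, A τ * B τ = 1 ∧ B τ * A τ = 1) → MemF p V B) ∧
    (∀ A : Efam p, MemF p V A → ∀ B : Efam p,
      Tendsto (fun τ : PosR => ‖(A * B - 1 : Efam p) τ‖) atTop (nhds 0) →
      Tendsto (fun τ : PosR => ‖(B * A - 1 : Efam p) τ‖) atTop (nhds 0) →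
      ∃ B' : Efam p, MemF p V B' ∧
        Tendsto (fun τ : PosR => ‖(A * B' - 1 : Efam p) τ‖) atTop (nhds 0) ∧
        Tendsto (fun τ : PosR => ‖(B' * A - 1 : Efam p) τ‖) atTop (nhds 0)) :=
  statement7_general p V hV
end
end
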